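/- Let (X,μ) be a measure space, q₀ < q < q₁ exponents in [1,∞), and suppose a measurable function φ and a family of functions (g_Q)_{Q ball} satisfy the John–Nirenberg-type estimate μ({x ∈ Q : |g_Q(x)| > λ N}) ≤ ρ₁ μ(Q)(e^{-ρ₂ λ} + λ^{-q₁}) for every ball Q and λ > 0, where N := sup_Q (μ(Q)^{-1} ∫_Q |g_Q|^{q₀} dμ)^{1/q₀}. Then there is a constant C = C(ρ₁, ρ₂, q, q₁) such that sup_Q (μ(Q)^{-1} ∫_Q |g_Q|^q dμ)^{1/q} ≤ C N. In particular, under the John–Nirenberg inequality, the BMO_q norms for q ∈ (q₀, q₁) are all equivalent. -/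

import Mathlib

/-!
Since `e^{-y} ≤ s^s y^{-s}`, the distributional estimate is a weak-type bound
`μ({x ∈ Q : |g_Q| > λN}) ≤ K μ(Q) λ^{-q₁}`. Cutting `Q` into the dyadic layers
`{2ⁿN < |g_Q| ≤ 2ⁿ⁺¹N}` then gives `∫_Q |g_Q|^q ≤ N^q μ(Q) (1 + K ∑ₙ 2^{(n+1)q - nq₁})`,
a geometric series that converges because `q < q₁`. The `g_Q` need not be measurable: the layers
are replaced by measurable hulls of the same measure.
-/

open MeasureTheory Set
open scoped ENNReal NNReal

theorem Real.exp_neg_le_rpow_mul_rpow_neg {s y : ℝ} (hs : 0 < s) (hy : 0 < y) :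
    Real.exp (-y) ≤ s ^ s * y ^ (-s) := by
  have hpow : (y / s) ^ s ≤ Real.exp y :=
    calc (y / s) ^ s ≤ Real.exp (y / s) ^ s := by
          gcongr; linarith [Real.add_one_le_exp (y / s)]
      _ = Real.exp y := by rw [← Real.exp_mul, div_mul_cancel₀ _ hs.ne']
  rw [Real.div_rpow hy.le hs.le, div_le_iff₀ (by positivity)] at hpow
  rw [Real.exp_neg, Real.rpow_neg hy.le, ← div_eq_mul_inv, le_div_iff₀ (by positivity)]
  calc (Real.exp y)⁻¹ * y ^ s ≤ (Real.exp y)⁻¹ * (Real.exp y * s ^ s) := by gcongr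
    _ = s ^ s := by field_simp

namespace ENNReal

theorem pow_rpow_comm (x : ℝ≥0∞) (n : ℕ) (z : ℝ) : (x ^ n) ^ z = (x ^ z) ^ n := by
  rw [← rpow_natCast_mul, mul_comm, rpow_mul_natCast]

theorem rpow_le_add_tsum_dyadic {a t : ℝ≥0∞} {q : ℝ} (hq : 0 ≤ q) (h : ∃ n : ℕ, a ≤ 2 ^ n * t) :
    a ^ q ≤ t ^ q + ∑' n : ℕ, {s | 2 ^ n * t < s}.indicator (fun _ ↦ (2 ^ (n + 1) * t) ^ q) a := by
  classical
  by_cases hat : a ≤ t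
  · exact le_add_right (rpow_le_rpow hat hq)
  obtain ⟨k, hk⟩ : ∃ k, Nat.find h = k + 1 :=
    Nat.exists_eq_add_one.2 <| Nat.pos_of_ne_zero fun h0 ↦ hat (by simpa [h0] using Nat.find_spec h)
  have hlt : 2 ^ k * t < a := not_le.1 (Nat.find_min h (by omega))
  have hle : a ≤ 2 ^ (k + 1) * t := hk ▸ Nat.find_spec h
  calc a ^ q ≤ (2 ^ (k + 1) * t) ^ q := rpow_le_rpow hle hq
    _ = {s | 2 ^ k * t < s}.indicator (fun _ ↦ (2 ^ (k + 1) * t) ^ q) a :=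
        (indicator_of_mem (s := {s | 2 ^ k * t < s}) hlt fun _ ↦ (2 ^ (k + 1) * t) ^ q).symm
    _ ≤ ∑' n : ℕ, {s | 2 ^ n * t < s}.indicator (fun _ ↦ (2 ^ (n + 1) * t) ^ q) a :=
        ENNReal.le_tsum k
    _ ≤ _ := le_add_self

end ENNReal

namespace MeasureTheory

variable {X : Type*} [MeasurableSpace X]

theorem lintegral_rpow_le_dyadic_tsum (ν : Measure X) (f : X → ℝ≥0∞) {q : ℝ} (hq : 0 ≤ q)
    (t : ℝ≥0∞) (hnull : ν {x | ∀ n : ℕ, 2 ^ n * t < f x} = 0) :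
    ∫⁻ x, f x ^ q ∂ν ≤
      t ^ q * ν univ + ∑' n : ℕ, (2 ^ (n + 1) * t) ^ q * ν {x | 2 ^ n * t < f x} := by
  set E : ℕ → Set X := fun n ↦ toMeasurable ν {x | 2 ^ n * t < f x}
  have hbounded : ∀ᵐ x ∂ν, ∃ n : ℕ, f x ≤ 2 ^ n * t := by
    rw [ae_iff]; simpa only [not_exists, not_le] using hnull
  have hae : ∀ᵐ x ∂ν, f x ^ q ≤
      t ^ q + ∑' n, (E n).indicator (fun _ ↦ (2 ^ (n + 1) * t) ^ q) x := by
    filter_upwards [hbounded] with x hx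
    refine (ENNReal.rpow_le_add_tsum_dyadic hq hx).trans (add_le_add le_rfl (ENNReal.tsum_le_tsum
      fun n ↦ ?_))
    exact indicator_le_indicator_of_subset (f := fun _ ↦ (2 ^ (n + 1) * t) ^ q)
      (subset_toMeasurable ν _) (fun _ ↦ zero_le) x
  calc ∫⁻ x, f x ^ q ∂ν
      ≤ ∫⁻ x, (t ^ q + ∑' n, (E n).indicator (fun _ ↦ (2 ^ (n + 1) * t) ^ q) x) ∂ν :=
        lintegral_mono_ae hae
    _ = _ := by
        rw [lintegral_add_right _ (Measurable.tsum fun n ↦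
            measurable_const.indicator (measurableSet_toMeasurable _ _)),
          lintegral_tsum fun n ↦
            (measurable_const.indicator (measurableSet_toMeasurable _ _)).aemeasurable]
        simp only [lintegral_indicator_const (measurableSet_toMeasurable _ _),
          measure_toMeasurable, lintegral_const]

open Filter Topology in
theorem lintegral_rpow_le_of_meas_lt_le_rpow_neg (ν : Measure X) (hν : ν univ ≠ ∞)
    (f : X → ℝ≥0∞) {p q : ℝ} (hq : 0 ≤ q) (hqp : q < p) {K t : ℝ≥0∞} (hK : K ≠ ∞)
    (hweak : ∀ l : ℝ≥0, 0 < l → ν {x | l * t < f x} ≤ K * ν univ * (l : ℝ≥0∞) ^ (-p)) :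
    ∫⁻ x, f x ^ q ∂ν ≤ (1 + 2 ^ q * K * (1 - 2 ^ (q - p))⁻¹) * t ^ q * ν univ := by
  have hdyadic : ∀ n : ℕ, ν {x | 2 ^ n * t < f x} ≤ K * ν univ * (2 ^ (-p)) ^ n := by
    intro n
    have := hweak (2 ^ n) (by positivity)
    push_cast at this
    rwa [ENNReal.pow_rpow_comm] at this
  have hnull : ν {x | ∀ n : ℕ, 2 ^ n * t < f x} = 0 := by
    have hlim : Tendsto (fun n : ℕ ↦ K * ν univ * (2 ^ (-p)) ^ n) atTop (𝓝 0) := by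
      simpa using ENNReal.Tendsto.const_mul (ENNReal.tendsto_pow_atTop_nhds_zero_of_lt_one
        (ENNReal.rpow_lt_one_of_one_lt_of_neg ENNReal.one_lt_two (by linarith)))
        (Or.inr (ENNReal.mul_ne_top hK hν))
    refine le_antisymm (ge_of_tendsto' hlim fun n ↦ (measure_mono ?_).trans (hdyadic n)) bot_le
    exact fun x hx ↦ hx n
  have hterm : ∀ n : ℕ, (2 ^ (n + 1) * t) ^ q * ν {x | 2 ^ n * t < f x}
      ≤ 2 ^ q * K * t ^ q * ν univ * (2 ^ (q - p)) ^ n := fun n ↦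
    calc (2 ^ (n + 1) * t) ^ q * ν {x | 2 ^ n * t < f x}
        ≤ (2 ^ (n + 1) * t) ^ q * (K * ν univ * (2 ^ (-p)) ^ n) := by gcongr; exact hdyadic n
      _ = 2 ^ q * K * t ^ q * ν univ * (2 ^ (q - p)) ^ n := by
          rw [ENNReal.mul_rpow_of_nonneg _ _ hq, pow_succ, ENNReal.mul_rpow_of_nonneg _ _ hq,
            ENNReal.pow_rpow_comm, sub_eq_add_neg,
            ENNReal.rpow_add _ _ two_ne_zero ENNReal.ofNat_ne_top, mul_pow]
          ring
  calc ∫⁻ x, f x ^ q ∂ν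
      ≤ t ^ q * ν univ + ∑' n : ℕ, (2 ^ (n + 1) * t) ^ q * ν {x | 2 ^ n * t < f x} :=
        lintegral_rpow_le_dyadic_tsum ν f hq t hnull
    _ ≤ t ^ q * ν univ + ∑' n : ℕ, 2 ^ q * K * t ^ q * ν univ * (2 ^ (q - p)) ^ n :=
        add_le_add le_rfl (ENNReal.tsum_le_tsum hterm)
    _ = _ := by rw [ENNReal.tsum_mul_left, ENNReal.tsum_geometric]; ring

theorem measure_restrict_lt_nnnorm_le_of_johnNirenberg {μ : Measure X} {s : Set X}
    (hs : MeasurableSet s) {g : X → ℝ} {N ρ₁ ρ₂ p : ℝ} (hN : 0 ≤ N) (hρ₁ : 0 ≤ ρ₁)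
    (hρ₂ : 0 < ρ₂) (hp : 0 < p)
    (hJN : ∀ l : ℝ, 0 < l → μ {x ∈ s | l * N < |g x|} ≤ ENNReal.ofReal ρ₁ * μ s *
      (ENNReal.ofReal (Real.exp (-(ρ₂ * l))) + ENNReal.ofReal (l ^ (-p))))
    (l : ℝ≥0) (hl : 0 < l) :
    μ.restrict s {x | l * ENNReal.ofReal N < ‖g x‖₊} ≤
      ENNReal.ofReal (ρ₁ * (p ^ p * ρ₂ ^ (-p) + 1)) * μ.restrict s univ * (l : ℝ≥0∞) ^ (-p) := by
  have hl' : (0 : ℝ) < l := hl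
  have hset : {x | (l : ℝ≥0∞) * ENNReal.ofReal N < ‖g x‖₊} = {x | l * N < |g x|} := by
    ext x
    rw [mem_ofPred_eq, mem_ofPred_eq, ← ENNReal.ofReal_coe_nnreal,
      ← ENNReal.ofReal_mul l.coe_nonneg, ← enorm_eq_nnnorm, ← ofReal_norm,
      ENNReal.ofReal_lt_ofReal_iff_of_nonneg (by positivity), Real.norm_eq_abs]
  have hexp : Real.exp (-(ρ₂ * l)) ≤ p ^ p * ρ₂ ^ (-p) * (l : ℝ) ^ (-p) := by
    simpa [Real.mul_rpow hρ₂.le hl'.le, mul_assoc] using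
      Real.exp_neg_le_rpow_mul_rpow_neg hp (mul_pos hρ₂ hl')
  have htail : ENNReal.ofReal ρ₁ *
      (ENNReal.ofReal (Real.exp (-(ρ₂ * l))) + ENNReal.ofReal ((l : ℝ) ^ (-p))) ≤
        ENNReal.ofReal (ρ₁ * (p ^ p * ρ₂ ^ (-p) + 1)) * ENNReal.ofReal ((l : ℝ) ^ (-p)) := by
    rw [← ENNReal.ofReal_add (by positivity) (by positivity), ← ENNReal.ofReal_mul hρ₁,
      ← ENNReal.ofReal_mul (by positivity)]
    refine ENNReal.ofReal_le_ofReal ?_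
    rw [mul_assoc]
    gcongr
    linarith
  rw [Measure.restrict_apply' hs, hset, ofPred_inter_eq_sep, Measure.restrict_apply_univ,
    ← ENNReal.ofReal_coe_nnreal, ENNReal.ofReal_rpow_of_pos hl']
  calc μ {x ∈ s | l * N < |g x|}
      ≤ μ s * (ENNReal.ofReal ρ₁ *
          (ENNReal.ofReal (Real.exp (-(ρ₂ * l))) + ENNReal.ofReal ((l : ℝ) ^ (-p)))) :=
        (hJN l hl').trans_eq (by ring)
    _ ≤ μ s * (ENNReal.ofReal (ρ₁ * (p ^ p * ρ₂ ^ (-p) + 1)) * ENNReal.ofReal ((l : ℝ) ^ (-p))) :=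
        by gcongr μ s * ?_
    _ = _ := by ring

end MeasureTheory

theorem ENNReal.rpow_one_div_inv_mul_le {m I C a : ℝ≥0∞} {q : ℝ} (hq : 0 < q) (hm₀ : m ≠ 0)
    (hm : m ≠ ∞) (hI : I ≤ C * a ^ q * m) : (m⁻¹ * I) ^ (1 / q) ≤ C ^ (1 / q) * a :=
  calc (m⁻¹ * I) ^ (1 / q) ≤ (m⁻¹ * (C * a ^ q * m)) ^ (1 / q) := by gcongr
    _ = C ^ (1 / q) * a := by
        rw [mul_comm, mul_assoc, ENNReal.mul_inv_cancel hm₀ hm, mul_one,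
          ENNReal.mul_rpow_of_nonneg _ _ (by positivity), one_div, ENNReal.rpow_rpow_inv hq.ne']

/-- a John–Nirenberg-type distributional estimate
`μ({x ∈ Q : |g_Q| > λN}) ≤ ρ₁ μ(Q)(e^{-ρ₂λ} + λ^{-q₁})` self-improves: for any
`q₀ < q < q₁` there is `C = C(ρ₁,ρ₂,q,q₁)` with
`sup_Q (μ(Q)⁻¹ ∫_Q |g_Q|^q)^{1/q} ≤ C N`; in particular the `BMO_q` norms for
`q ∈ (q₀,q₁)` are equivalent. -/
theorem john_nirenberg_self_improvement
    (ρ₁ ρ₂ q₀ q q₁ : ℝ) (hρ₁ : 0 < ρ₁) (hρ₂ : 0 < ρ₂)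
    (hq₀ : 1 ≤ q₀) (hq₀q : q₀ < q) (hqq₁ : q < q₁) :
    ∃ C > (0 : ℝ),
      ∀ {X : Type} [MeasurableSpace X] (μ : Measure X)
        {ι : Type} (Q : ι → Set X) (g : ι → X → ℝ) (N : ℝ), 0 ≤ N →
        (∀ i, MeasurableSet (Q i)) →
        (∀ i, 0 < μ (Q i) ∧ μ (Q i) < ⊤) →
        -- `N` bounds the `BMO_{q₀}`-type norm
        (∀ i, ((μ (Q i))⁻¹ * ∫⁻ x in Q i, (‖g i x‖₊ : ℝ≥0∞) ^ q₀ ∂μ) ^ (1/q₀)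
            ≤ ENNReal.ofReal N) →
        -- the John–Nirenberg distributional estimate
        (∀ i, ∀ l : ℝ, 0 < l →
          μ {x ∈ Q i | l * N < |g i x|}
            ≤ ENNReal.ofReal ρ₁ * μ (Q i) *
                (ENNReal.ofReal (Real.exp (-(ρ₂ * l))) + ENNReal.ofReal (l ^ (-q₁)))) →
        ∀ i, ((μ (Q i))⁻¹ * ∫⁻ x in Q i, (‖g i x‖₊ : ℝ≥0∞) ^ q ∂μ) ^ (1/q)
            ≤ ENNReal.ofReal (C * N) := by
  have hq : 0 < q := by linarith
  have hq₁ : 0 < q₁ := by linarith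
  set K : ℝ≥0∞ := ENNReal.ofReal (ρ₁ * (q₁ ^ q₁ * ρ₂ ^ (-q₁) + 1))
  set C : ℝ≥0∞ := 1 + 2 ^ q * K * (1 - 2 ^ (q - q₁))⁻¹
  have hC : C ≠ ∞ := by
    refine ENNReal.add_ne_top.2 ⟨ENNReal.one_ne_top, ENNReal.mul_ne_top (ENNReal.mul_ne_top
      (ENNReal.rpow_ne_top_of_nonneg hq.le ENNReal.ofNat_ne_top) ENNReal.ofReal_ne_top) ?_⟩
    exact ENNReal.inv_ne_top.2 (tsub_pos_of_lt (ENNReal.rpow_lt_one_of_one_lt_of_neg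
      ENNReal.one_lt_two (by linarith))).ne'
  refine ⟨C.toReal ^ (1 / q), Real.rpow_pos_of_pos (ENNReal.toReal_pos
    (one_pos.trans_le le_self_add).ne' hC) _, ?_⟩
  intro X _ μ ι Q g N hN hQm hQfin _ hJN i
  obtain ⟨hQ₀, hQ⟩ := hQfin i
  have hint := lintegral_rpow_le_of_meas_lt_le_rpow_neg (μ.restrict (Q i))
    (by simpa using hQ.ne) (fun x ↦ (‖g i x‖₊ : ℝ≥0∞)) hq.le hqq₁ ENNReal.ofReal_ne_top
    (measure_restrict_lt_nnnorm_le_of_johnNirenberg (hQm i) hN hρ₁.le hρ₂ hq₁ (hJN i))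
  rw [Measure.restrict_apply_univ] at hint
  rw [ENNReal.ofReal_mul (by positivity), ← ENNReal.ofReal_rpow_of_nonneg ENNReal.toReal_nonneg
    (by positivity), ENNReal.ofReal_toReal hC]
  exact ENNReal.rpow_one_div_inv_mul_le hq hQ₀.ne' hQ.ne hint
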